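/- arXiv:2006.05157 — 6 statements merged into one kernel-verified Lean document; each statement's English description precedes it below -/
import Mathlib

section
/- For every n ≥ 2 there exist a surjective SupBotHom g : Finset (Fin (2n−1)) → D(n) and a SupBotHom h : D(n) → Finset (Fin (2n−1)) such that g ∘ h = id on D(n). In other words, D(n) is a retract of the free B-module of rank 2n−1, and hence a projective B-module. -/
/-!
Every element of `D(n)` is a join of sup-prime elements, of which there are `2n - 1`:
`a₁₁, a₂₁, a₃₂, …, a_{n,n-1}` and `a₁₂, a₁₃, a₂₄, …, a_{n-2,n}`. Indeed `a_{ik}` is the join of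
`a_{i,i-1}` (`a₁₁` if `i = 1`) with `a_{k-2,k}` (`a₁₂`, `a₁₃` if `k = 2, 3`; nothing if `k = 1`).
A join-semilattice with bottom generated by finitely many sup-prime elements `e i` is a retract
of `Finset ι`: `s ↦ ⨆ i ∈ s, e i` is split by `x ↦ {i | e i ≤ x}`, which preserves joins exactly
because the `e i` are sup-prime.
-/

open scoped Classical

def Sset (n : ℕ) : Set (ℕ × ℕ) :=
  {p | 1 ≤ p.1 ∧ p.1 ≤ n ∧ 1 ≤ p.2 ∧ p.2 ≤ n ∧ p.1 ≤ p.2 + 1 ∧ p.2 ≤ p.1 + 2}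

/-- `S(n)` as a sublattice of `ℕ × ℕ` (componentwise max and min). -/
def SL (n : ℕ) : Sublattice (ℕ × ℕ) where
  carrier := Sset n
  supClosed' := by
    rintro ⟨i, k⟩ h1 ⟨l, m⟩ h2
    simp only [Sset, Set.mem_setOf_eq, Prod.sup_def] at h1 h2 ⊢
    omega
  infClosed' := by
    rintro ⟨i, k⟩ h1 ⟨l, m⟩ h2
    simp only [Sset, Set.mem_setOf_eq, Prod.inf_def] at h1 h2 ⊢
    omega

/-- `D(n) = WithBot S(n)`: `S(n)` with a bottom element `O` adjoined. -/
abbrev Dn (n : ℕ) : Type := WithBot ↥(SL n)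

/-- The element `a_{ik}` of `D(n)` (junk value `⊥` if `(i,k) ∉ S(n)`). -/
noncomputable def aElt (n i k : ℕ) : Dn n :=
  if h : (i, k) ∈ SL n then (↑(⟨(i, k), h⟩ : ↥(SL n)) : Dn n) else ⊥

section Retract

variable {α ι : Type*} [SemilatticeSup α] [OrderBot α] [DecidableEq ι]

def Finset.supBotHom (e : ι → α) : SupBotHom (Finset ι) α where
  toFun s := s.sup e
  map_sup' _ _ := Finset.sup_union
  map_bot' := Finset.sup_empty

variable [Fintype ι] {e : ι → α}

noncomputable def indicesBelow (he : ∀ i, SupPrime (e i)) : SupBotHom α (Finset ι) where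
  toFun x := {i | e i ≤ x}
  map_sup' x y := by
    ext i
    simp only [Finset.mem_filter, Finset.mem_univ, true_and, Finset.sup_eq_union,
      Finset.mem_union, (he i).le_sup]
  map_bot' := by
    ext i
    simp [(he i).ne_bot]

lemma mem_indicesBelow (he : ∀ i, SupPrime (e i)) (x : α) (i : ι) :
    i ∈ indicesBelow he x ↔ e i ≤ x := by
  simp [indicesBelow]

lemma supBotHom_indicesBelow (he : ∀ i, SupPrime (e i))
    (hgen : ∀ x, ∃ s : Finset ι, s.sup e = x) (x : α) :
    Finset.supBotHom e (indicesBelow he x) = x := by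
  obtain ⟨s, rfl⟩ := hgen x
  refine le_antisymm (Finset.sup_le fun i hi => ?_) (Finset.sup_mono fun i hi => ?_)
  · exact (mem_indicesBelow he _ i).1 hi
  · exact (mem_indicesBelow he _ i).2 (Finset.le_sup hi)

theorem exists_retract_finset_of_supPrime (he : ∀ i, SupPrime (e i))
    (hgen : ∀ x, ∃ s : Finset ι, s.sup e = x) :
    ∃ (g : SupBotHom (Finset ι) α) (h : SupBotHom α (Finset ι)),
      Function.Surjective g ∧ ∀ x, g (h x) = x :=
  have hret := supBotHom_indicesBelow he hgen
  ⟨_, _, fun x => ⟨_, hret x⟩, hret⟩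

end Retract

lemma WithBot.supPrime_coe {β : Type*} [SemilatticeSup β] {a : β}
    (ha : ∀ b c, a ≤ b ⊔ c → a ≤ b ∨ a ≤ c) : SupPrime (a : WithBot β) := by
  refine ⟨fun hmin => WithBot.coe_ne_bot hmin.eq_bot, fun {b c} hbc => ?_⟩
  induction b using WithBot.recBotCoe with
  | bot => exact Or.inr (by simpa using hbc)
  | coe b =>
    induction c using WithBot.recBotCoe with
    | bot => exact Or.inl (by simpa using hbc)
    | coe c => simpa only [WithBot.coe_le_coe] using ha b c (by exact_mod_cast hbc)

namespace Dn

/-- Index `j < n` encodes `a_{j+1,j}` (`a₁₁` for `j = 0`), index `n + t` encodes `a_{t,t+2}`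
(`a₁₂`, `a₁₃` for `t = 0, 1`). -/
def genIndex (n j : ℕ) : ℕ × ℕ :=
  if j < n then (j + 1, max j 1) else (max (j - n) 1, j - n + 2)

lemma genIndex_mem {n j : ℕ} (hj : j < 2 * n - 1) : genIndex n j ∈ SL n := by
  change genIndex n j ∈ Sset n
  unfold genIndex Sset
  split <;> simp only [Set.mem_ofPred_eq] <;> omega

def gen (n : ℕ) (j : Fin (2 * n - 1)) : Dn n :=
  ((⟨genIndex n j, genIndex_mem j.isLt⟩ : SL n) : Dn n)

lemma genIndex_le_or_le {n j : ℕ} (a b : SL n) (h : genIndex n j ≤ (a : ℕ × ℕ) ⊔ b) :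
    genIndex n j ≤ a ∨ genIndex n j ≤ b := by
  obtain ⟨⟨a₁, a₂⟩, ha : (a₁, a₂) ∈ Sset n⟩ := a
  obtain ⟨⟨b₁, b₂⟩, hb : (b₁, b₂) ∈ Sset n⟩ := b
  simp only [Sset, Set.mem_ofPred_eq] at ha hb
  unfold genIndex at h ⊢
  split_ifs at h ⊢ <;> simp only [Prod.sup_def, Prod.mk_le_mk] at h ⊢ <;> omega

lemma supPrime_gen (n : ℕ) (j : Fin (2 * n - 1)) : SupPrime (gen n j) :=
  WithBot.supPrime_coe fun a b => genIndex_le_or_le a b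

lemma exists_finset_sup_gen (n : ℕ) (x : Dn n) :
    ∃ s : Finset (Fin (2 * n - 1)), s.sup (gen n) = x := by
  induction x using WithBot.recBotCoe with
  | bot => exact ⟨∅, rfl⟩
  | coe a =>
    obtain ⟨⟨i, k⟩, ha : (i, k) ∈ Sset n⟩ := a
    simp only [Sset, Set.mem_ofPred_eq] at ha
    refine ⟨{⟨i - 1, by omega⟩, ⟨if k = 1 then i - 1 else n + k - 2, by split <;> omega⟩}, ?_⟩
    rw [Finset.sup_insert, Finset.sup_singleton]
    simp only [gen, ← WithBot.coe_sup, WithBot.coe_inj, Subtype.ext_iff, Sublattice.coe_sup]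
    unfold genIndex
    split_ifs <;> simp only [Prod.sup_def, Prod.mk.injEq] <;> omega

end Dn

theorem stmt1_general (n : ℕ) :
    ∃ (g : SupBotHom (Finset (Fin (2 * n - 1))) (Dn n))
      (h : SupBotHom (Dn n) (Finset (Fin (2 * n - 1)))),
      Function.Surjective g ∧ ∀ x, g (h x) = x :=
  exists_retract_finset_of_supPrime (Dn.supPrime_gen n) (Dn.exists_finset_sup_gen n)

/-- For every `n ≥ 2` there are a surjective `SupBotHom`
`g : Finset (Fin (2n−1)) → D(n)` and a `SupBotHom` `h : D(n) → Finset (Fin (2n−1))`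
with `g ∘ h = id`: `D(n)` is a retract of the free B-module of rank `2n−1`,
hence a projective B-module. -/
theorem stmt1 (n : ℕ) (hn : 2 ≤ n) :
    ∃ (g : SupBotHom (Finset (Fin (2 * n - 1))) (Dn n))
      (h : SupBotHom (Dn n) (Finset (Fin (2 * n - 1)))),
      Function.Surjective g ∧ ∀ x, g (h x) = x :=
  stmt1_general n
end

section
/- Let n, m ≥ 2 and let f : D(n) → D(m) be an injective SupBotHom satisfying f(a_{11}) = b_{11}, f(a_{12}) = b_{12}, f(a_{21}) = b_{21}, f(a_{22}) = b_{22}, f(a_{n−1,n−1}) = b_{m−1,m−1}, f(a_{n−1,n}) = b_{m−1,m}, f(a_{n,n−1}) = b_{m,m−1}, and f(a_{nn}) = b_{mm}, where a_{ik} denote the elements of D(n) and b_{ik} those of D(m). Then n = m and f is the identity morphism: f(O) = O and f(a_{ik}) = b_{ik} for every (i,k) ∈ S(n). -/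
open scoped Classical

lemma aElt_eq {n i k : ℕ} (h : (i,k) ∈ Sset n) :
    aElt n i k = ((⟨(i,k), h⟩ : ↥(SL n)) : Dn n) := dif_pos h

lemma aElt_sup {n i k l r : ℕ} (h1 : (i,k) ∈ Sset n) (h2 : (l,r) ∈ Sset n) :
    aElt n i k ⊔ aElt n l r = aElt n (max i l) (max k r) := by
  have hs : (max i l, max k r) ∈ Sset n := by
    simp only [Sset, Set.mem_setOf_eq] at h1 h2 ⊢
    omega
  rw [aElt_eq h1, aElt_eq h2, aElt_eq hs, ← WithBot.coe_sup]
  congr 1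

lemma pin {n m : ℕ} (f : SupBotHom (Dn n) (Dn m)) (hinj : Function.Injective f)
    {ci ck ei ek i k : ℕ}
    (hc : (ci, ck) ∈ Sset n) (he : (ei, ek) ∈ Sset n) (hj : (i, k) ∈ Sset n)
    (hcm : (ci, ck) ∈ Sset m) (hem : (ei, ek) ∈ Sset m)
    (hfc : f (aElt n ci ck) = aElt m ci ck)
    (hfe : f (aElt n ei ek) = aElt m ei ek)
    (hlc : ci ≤ i ∧ ck ≤ k) (hne : ¬(ci = i ∧ ck = k))
    (hnl : ¬(ei ≤ i ∧ ek ≤ k))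
    (huniq : ∀ pq : ℕ × ℕ, pq ∈ Sset m → ci ≤ pq.1 → ck ≤ pq.2 →
      ¬(ei ≤ pq.1 ∧ ek ≤ pq.2) → ¬(pq.1 = ci ∧ pq.2 = ck) → pq.1 = i ∧ pq.2 = k) :
    (i, k) ∈ Sset m ∧ f (aElt n i k) = aElt m i k := by
  have hrefl : ∀ a b : Dn n, f a ≤ f b → a ≤ b := by
    intro a b hab
    have h : f (a ⊔ b) = f b := by rw [map_sup f a b, sup_eq_right.2 hab]
    exact sup_eq_right.1 (hinj h)
  have hmono : ∀ a b : Dn n, a ≤ b → f a ≤ f b := fun a b hab => by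
    have h : f (a ⊔ b) = f a ⊔ f b := map_sup f a b
    rw [sup_eq_right.2 hab] at h
    exact h ▸ le_sup_left
  have hlecj : aElt n ci ck ≤ aElt n i k := by
    rw [aElt_eq hc, aElt_eq hj, WithBot.coe_le_coe]
    exact Subtype.mk_le_mk.2 (Prod.mk_le_mk.2 ⟨hlc.1, hlc.2⟩)
  have H1 : aElt m ci ck ≤ f (aElt n i k) := by
    rw [← hfc]; exact hmono _ _ hlecj
  have H2 : aElt m ci ck ≠ f (aElt n i k) := by
    intro h
    apply hne
    have h2 := hinj (hfc.trans h)
    rw [aElt_eq hc, aElt_eq hj] at h2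
    have h3 := congrArg (fun z : Dn n => z) h2
    have h4 : ((ci, ck) : ℕ × ℕ) = (i, k) := by
      have := WithBot.coe_inj.1 h2
      exact congrArg Subtype.val this
    exact ⟨congrArg Prod.fst h4, congrArg Prod.snd h4⟩
  have H3 : ¬ aElt m ei ek ≤ f (aElt n i k) := by
    intro h
    apply hnl
    rw [← hfe] at h
    have := hrefl _ _ h
    rw [aElt_eq he, aElt_eq hj, WithBot.coe_le_coe] at this
    exact Prod.mk_le_mk.1 (Subtype.mk_le_mk.1 this)
  have hne_bot : f (aElt n i k) ≠ ⊥ := by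
    intro hbot
    rw [hbot, aElt_eq hcm] at H1
    exact WithBot.not_coe_le_bot _ H1
  obtain ⟨x, hx⟩ := WithBot.ne_bot_iff_exists.1 hne_bot
  rw [← hx, aElt_eq hcm, WithBot.coe_le_coe] at H1
  rw [← hx, aElt_eq hem, WithBot.coe_le_coe] at H3
  rw [← hx, aElt_eq hcm] at H2
  have hle1 : ci ≤ (x : ℕ × ℕ).1 ∧ ck ≤ (x : ℕ × ℕ).2 :=
    Prod.le_def.1 (Subtype.coe_le_coe.2 H1)
  have hnl' : ¬(ei ≤ (x : ℕ × ℕ).1 ∧ ek ≤ (x : ℕ × ℕ).2) := by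
    intro hh
    exact H3 (Subtype.coe_le_coe.1 (Prod.le_def.2 hh))
  have hne' : ¬((x : ℕ × ℕ).1 = ci ∧ (x : ℕ × ℕ).2 = ck) := by
    intro hh
    apply H2
    have : (⟨(ci, ck), hcm⟩ : ↥(SL m)) = x := Subtype.ext (Prod.ext hh.1.symm hh.2.symm)
    rw [this]
  have key := huniq (x : ℕ × ℕ) x.2 hle1.1 hle1.2 hnl' hne'
  have hxval : (x : ℕ × ℕ) = (i, k) := Prod.ext key.1 key.2
  have hmem : (i, k) ∈ Sset m := hxval ▸ x.2
  refine ⟨hmem, ?_⟩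
  rw [← hx, aElt_eq hmem, WithBot.coe_inj]
  exact Subtype.ext hxval

/-- Any injective `SupBotHom` `f : D(n) → D(m)` (`n, m ≥ 2`) matching the four
bottom corner elements and the four top corner elements is the identity morphism
(and in particular `n = m`). -/
theorem stmt2 (n m : ℕ) (hn : 2 ≤ n) (hm : 2 ≤ m)
    (f : SupBotHom (Dn n) (Dn m)) (hinj : Function.Injective f)
    (h11 : f (aElt n 1 1) = aElt m 1 1)
    (h12 : f (aElt n 1 2) = aElt m 1 2)
    (h21 : f (aElt n 2 1) = aElt m 2 1)
    (h22 : f (aElt n 2 2) = aElt m 2 2)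
    (t11 : f (aElt n (n - 1) (n - 1)) = aElt m (m - 1) (m - 1))
    (t12 : f (aElt n (n - 1) n) = aElt m (m - 1) m)
    (t21 : f (aElt n n (n - 1)) = aElt m m (m - 1))
    (t22 : f (aElt n n n) = aElt m m m) :
    n = m ∧ f ⊥ = ⊥ ∧ ∀ i k : ℕ, (i, k) ∈ Sset n → f (aElt n i k) = aElt m i k := by
  have main : ∀ s i k, (i,k) ∈ Sset n →
      2*(i+k) + (if k = i+2 ∨ i = k+1 then 1 else 0) ≤ s →
      (i,k) ∈ Sset m ∧ f (aElt n i k) = aElt m i k := by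
    intro s
    induction s with
    | zero =>
      intro i k hik hs
      exfalso
      have a1 : 1 ≤ i := hik.1
      split_ifs at hs <;> omega
    | succ s ih =>
      intro i k hik hμ
      obtain ⟨a1, a2, a3, a4, a5, a6⟩ := hik
      simp only at a1 a2 a3 a4 a5 a6
      by_cases hb : i ≤ 2 ∧ k ≤ 2
      · obtain ⟨hb1, hb2⟩ := hb
        interval_cases i <;> interval_cases k <;>
          exact ⟨by simp only [Sset, Set.mem_setOf_eq]; omega, by assumption⟩
      · by_cases hd1 : k = i + 2
        · -- even irreducible (i, i+2)
          subst hd1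
          have hμ' : 2*(i+(i+2)) + 1 ≤ s + 1 := by
            rwa [if_pos (Or.inl rfl)] at hμ
          have hj : (i, i+2) ∈ Sset n := by simp only [Sset, Set.mem_setOf_eq]; omega
          have hc : (i, i+1) ∈ Sset n := by simp only [Sset, Set.mem_setOf_eq]; omega
          have he : (i+1, i+1) ∈ Sset n := by simp only [Sset, Set.mem_setOf_eq]; omega
          obtain ⟨hcm, hfc⟩ := ih i (i+1) hc (by rw [if_neg (by omega)]; omega)
          obtain ⟨hem, hfe⟩ := ih (i+1) (i+1) he (by rw [if_neg (by omega)]; omega)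
          exact pin f hinj hc he hj hcm hem hfc hfe ⟨le_rfl, by omega⟩ (by omega) (by omega)
            (by rintro ⟨p, q⟩ hpq hl1 hl2 hnl hne
                simp only [Sset, Set.mem_setOf_eq] at hpq
                dsimp only at hl1 hl2 hnl hne ⊢
                omega)
        · by_cases hd2 : i = k + 1
          · -- odd irreducible (k+1, k)
            subst hd2
            have hk2 : 2 ≤ k := by omega
            have hμ' : 2*((k+1)+k) + 1 ≤ s + 1 := by
              rwa [if_pos (Or.inr rfl)] at hμ
            have hj : (k+1, k) ∈ Sset n := by simp only [Sset, Set.mem_setOf_eq]; omega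
            have hc : (k, k) ∈ Sset n := by simp only [Sset, Set.mem_setOf_eq]; omega
            have he : (k, k+1) ∈ Sset n := by simp only [Sset, Set.mem_setOf_eq]; omega
            obtain ⟨hcm, hfc⟩ := ih k k hc (by rw [if_neg (by omega)]; omega)
            obtain ⟨hem, hfe⟩ := ih k (k+1) he (by rw [if_neg (by omega)]; omega)
            exact pin f hinj hc he hj hcm hem hfc hfe ⟨by omega, le_rfl⟩ (by omega) (by omega)
              (by rintro ⟨p, q⟩ hpq hl1 hl2 hnl hne
                  simp only [Sset, Set.mem_setOf_eq] at hpq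
                  dsimp only at hl1 hl2 hnl hne ⊢
                  omega)
          · -- reducible
            have hik5 : 2 ≤ i ∧ 3 ≤ k := by omega
            have hμ' : 2*(i+k) ≤ s + 1 := by
              rw [if_neg (by omega)] at hμ; omega
            have hc1 : (i, k-1) ∈ Sset n := by simp only [Sset, Set.mem_setOf_eq]; omega
            have hc2 : (i-1, k) ∈ Sset n := by simp only [Sset, Set.mem_setOf_eq]; omega
            obtain ⟨hm1, hf1⟩ := ih i (k-1) hc1
              (le_trans (by split_ifs <;> omega : _ ≤ 2*(i+(k-1)) + 1) (by omega))
            obtain ⟨hm2, hf2⟩ := ih (i-1) k hc2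
              (le_trans (by split_ifs <;> omega : _ ≤ 2*((i-1)+k) + 1) (by omega))
            have hsup : aElt n i (k-1) ⊔ aElt n (i-1) k = aElt n i k := by
              rw [aElt_sup hc1 hc2]
              congr 1 <;> omega
            have hmem : (i, k) ∈ Sset m := by
              simp only [Sset, Set.mem_setOf_eq] at hm1 hm2 ⊢
              omega
            refine ⟨hmem, ?_⟩
            rw [← hsup, map_sup, hf1, hf2, aElt_sup hm1 hm2]
            congr 1 <;> omega
  have hnn : (n, n) ∈ Sset n := by simp only [Sset, Set.mem_setOf_eq]; omega
  obtain ⟨hnm_mem, hfnn⟩ := main _ n n hnn le_rfl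
  have hmm : (m, m) ∈ Sset m := by simp only [Sset, Set.mem_setOf_eq]; omega
  have heq : aElt m n n = aElt m m m := hfnn.symm.trans t22
  rw [aElt_eq hnm_mem, aElt_eq hmm] at heq
  have h2 := WithBot.coe_inj.1 heq
  have h3 : n = m := congrArg (fun z : ↥(SL m) => z.val.1) h2
  exact ⟨h3, map_bot f, fun i k h => (main _ i k h le_rfl).2⟩
end

section
/- Let n ≥ 4. The map i : D_0 → D(n) defined by i(O) = O, i(A_{11}) = a_{11}, i(A_{12}) = a_{12}, i(A_{21}) = a_{21}, i(A_{22}) = a_{22}, i(A_{33}) = a_{n−1,n−1}, i(A_{34}) = a_{n−1,n}, i(A_{43}) = a_{n,n−1}, i(A_{44}) = a_{nn} is an injective SupBotHom of B-modules, and it is a splittable injection: there exists a SupBotHom j : D(n) → D_0 with j ∘ i = id on D_0. -/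
/-!
The inclusion is coordinatewise: `1 ↦ 1, 2 ↦ 2, 3 ↦ n - 1, 4 ↦ n`, a monotone map of `ℕ`, so it
preserves componentwise maxima. A retraction collapses each coordinate monotonically
(`1 ↦ 1`, `2, …, n - 2 ↦ 2`, `n - 1 ↦ 3`, `n ↦ 4`) and then sends every point outside the lower
square `{1, 2}²` to its join with `(3, 3)` (collapsing alone may produce `(2, 3) ∉ D_0`).
Both steps preserve joins, the result lands in `D_0`, and on the image of the inclusion it is
the identity.
-/

open scoped Classical

/-- The 8-element sublattice of `ℕ × ℕ` underlying `D_0`. -/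
def SL0 : Sublattice (ℕ × ℕ) where
  carrier := {(1,1),(1,2),(2,1),(2,2),(3,3),(3,4),(4,3),(4,4)}
  supClosed' := by
    intro a ha b hb
    simp only [Set.mem_insert_iff, Set.mem_singleton_iff] at *
    rcases ha with rfl|rfl|rfl|rfl|rfl|rfl|rfl|rfl <;>
      rcases hb with rfl|rfl|rfl|rfl|rfl|rfl|rfl|rfl <;> decide
  infClosed' := by
    intro a ha b hb
    simp only [Set.mem_insert_iff, Set.mem_singleton_iff] at *
    rcases ha with rfl|rfl|rfl|rfl|rfl|rfl|rfl|rfl <;>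
      rcases hb with rfl|rfl|rfl|rfl|rfl|rfl|rfl|rfl <;> decide

/-- The 9-element B-module `D_0` (with bottom element `O` adjoined). -/
abbrev D0 : Type := WithBot ↥SL0

/-- The element `A_{ik}` of `D_0` (junk value `⊥` if `(i,k)` is not in the lattice). -/
noncomputable def A0 (i k : ℕ) : D0 :=
  if h : (i, k) ∈ SL0 then (↑(⟨(i, k), h⟩ : ↥SL0) : D0) else ⊥

namespace SupHom

variable {α β γ δ : Type*}

def prodMap [SemilatticeSup α] [SemilatticeSup β] [SemilatticeSup γ] [SemilatticeSup δ]
    (f : SupHom α β) (g : SupHom γ δ) : SupHom (α × γ) (β × δ) where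
  toFun := Prod.map f g
  map_sup' x y := Prod.ext (map_sup f x.1 y.1) (map_sup g x.2 y.2)

@[simp]
lemma prodMap_apply [SemilatticeSup α] [SemilatticeSup β] [SemilatticeSup γ] [SemilatticeSup δ]
    (f : SupHom α β) (g : SupHom γ δ) (x : α × γ) : prodMap f g x = (f x.1, g x.2) :=
  rfl

def restrict [Lattice α] [Lattice β] (f : SupHom α β) {L : Sublattice α} {M : Sublattice β}
    (h : Set.MapsTo f L M) : SupHom L M where
  toFun x := ⟨f x, h x.2⟩
  map_sup' x y := Subtype.ext (map_sup f (x : α) y)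

def supOutside [SemilatticeSup α] [DecidableLE α] (c d : α) : SupHom α α where
  toFun x := if x ≤ c then x else x ⊔ d
  map_sup' x y := by
    by_cases hx : x ≤ c <;> by_cases hy : y ≤ c <;>
      simp only [sup_le_iff, hx, hy, and_false, and_true, and_self, ↓reduceIte] <;> ac_rfl

lemma supOutside_apply [SemilatticeSup α] [DecidableLE α] (c d x : α) :
    supOutside c d x = if x ≤ c then x else x ⊔ d :=
  rfl

lemma supOutside_eq_self [SemilatticeSup α] [DecidableLE α] {c d x : α} (h : x ≤ c ∨ d ≤ x) :
    supOutside c d x = x := by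
  rcases h with h | h <;> simp [supOutside_apply, h]

lemma leftInverse_withBot [SemilatticeSup α] [SemilatticeSup β] {f : SupHom α β} {g : SupHom β α}
    (h : Function.LeftInverse g f) : Function.LeftInverse g.withBot f.withBot
  | ⊥ => rfl
  | (x : α) => congrArg _ (h x)

end SupHom

lemma mem_SL0_iff {p : ℕ × ℕ} : p ∈ SL0 ↔ p = (1, 1) ∨ p = (1, 2) ∨ p = (2, 1) ∨ p = (2, 2) ∨
    p = (3, 3) ∨ p = (3, 4) ∨ p = (4, 3) ∨ p = (4, 4) :=
  Iff.rfl

lemma mem_SL_iff {n : ℕ} {p : ℕ × ℕ} :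
    p ∈ SL n ↔ 1 ≤ p.1 ∧ p.1 ≤ n ∧ 1 ≤ p.2 ∧ p.2 ≤ n ∧ p.1 ≤ p.2 + 1 ∧ p.2 ≤ p.1 + 2 :=
  Iff.rfl

@[simps]
def embedCoord (n : ℕ) (hn : 3 ≤ n) : ℕ →o ℕ where
  toFun m := if m ≤ 2 then m else if m = 3 then n - 1 else n
  monotone' a b hab := by dsimp only; split_ifs <;> omega

@[simps]
def collapseCoord (n : ℕ) : ℕ →o ℕ where
  toFun m := if m ≤ 1 then m else if m + 2 ≤ n then 2 else if m + 1 = n then 3 else 4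
  monotone' a b hab := by dsimp only; split_ifs <;> omega

-- `ℕ →o ℕ` coerces to `SupHom ℕ ℕ`: monotone maps out of a linear order preserve `⊔`.
def embedPair (n : ℕ) (hn : 3 ≤ n) : SupHom (ℕ × ℕ) (ℕ × ℕ) :=
  SupHom.prodMap (embedCoord n hn) (embedCoord n hn)

def collapsePair (n : ℕ) : SupHom (ℕ × ℕ) (ℕ × ℕ) :=
  (SupHom.supOutside (2, 2) (3, 3)).comp (SupHom.prodMap (collapseCoord n) (collapseCoord n))

lemma mapsTo_embedPair (n : ℕ) (hn : 3 ≤ n) : Set.MapsTo (embedPair n hn) SL0 (SL n) := by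
  intro p hp
  rcases mem_SL0_iff.1 hp with rfl | rfl | rfl | rfl | rfl | rfl | rfl | rfl <;>
    simp only [SetLike.mem_coe, mem_SL_iff, embedPair, SupHom.prodMap_apply, SupHom.coe_mk,
      embedCoord_coe] <;> split_ifs <;> omega

lemma collapseCoord_mem_Icc (n : ℕ) {m : ℕ} (hm : 1 ≤ m) : collapseCoord n m ∈ Set.Icc 1 4 := by
  simp only [collapseCoord_coe, Set.mem_Icc]
  split_ifs <;> omega

lemma collapseCoord_embedCoord (n : ℕ) (hn : 4 ≤ n) {m : ℕ} (hm : m ∈ Set.Icc 1 4) :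
    collapseCoord n (embedCoord n (by omega) m) = m := by
  simp only [Set.mem_Icc] at hm
  simp only [collapseCoord_coe, embedCoord_coe]
  split_ifs <;> omega

lemma supOutside_mem_SL0 {a b : ℕ} (ha : a ∈ Set.Icc 1 4) (hb : b ∈ Set.Icc 1 4) :
    SupHom.supOutside (2, 2) (3, 3) (a, b) ∈ SL0 := by
  simp only [Set.mem_Icc] at ha hb
  rw [SupHom.supOutside_apply, mem_SL0_iff]
  split_ifs with h
  all_goals simp only [Prod.mk_le_mk, Prod.mk_sup_mk, Prod.mk.injEq] at h ⊢; omega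

lemma mapsTo_collapsePair (n : ℕ) : Set.MapsTo (collapsePair n) (SL n) SL0 := by
  rintro ⟨i, k⟩ ⟨hi, -, hk, -⟩
  exact supOutside_mem_SL0 (collapseCoord_mem_Icc n hi) (collapseCoord_mem_Icc n hk)

lemma le_or_le_of_mem_SL0 {p : ℕ × ℕ} (hp : p ∈ SL0) : p ≤ (2, 2) ∨ (3, 3) ≤ p := by
  rcases mem_SL0_iff.1 hp with rfl | rfl | rfl | rfl | rfl | rfl | rfl | rfl <;> decide

lemma mem_Icc_of_mem_SL0 {p : ℕ × ℕ} (hp : p ∈ SL0) : p.1 ∈ Set.Icc 1 4 ∧ p.2 ∈ Set.Icc 1 4 := by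
  rcases mem_SL0_iff.1 hp with rfl | rfl | rfl | rfl | rfl | rfl | rfl | rfl <;> decide

lemma collapsePair_embedPair (n : ℕ) (hn : 4 ≤ n) {p : ℕ × ℕ} (hp : p ∈ SL0) :
    collapsePair n (embedPair n (by omega) p) = p := by
  obtain ⟨h1, h2⟩ := mem_Icc_of_mem_SL0 hp
  have hp' : SupHom.prodMap (collapseCoord n) (collapseCoord n) (embedPair n (by omega) p) = p :=
    Prod.ext (collapseCoord_embedCoord n hn h1) (collapseCoord_embedCoord n hn h2)
  change SupHom.supOutside _ _ (SupHom.prodMap _ _ _) = p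
  rw [hp']
  exact SupHom.supOutside_eq_self (le_or_le_of_mem_SL0 hp)

def inclD0 (n : ℕ) (hn : 3 ≤ n) : SupHom SL0 (SL n) :=
  (embedPair n hn).restrict (mapsTo_embedPair n hn)

def retractD0 (n : ℕ) : SupHom (SL n) SL0 :=
  (collapsePair n).restrict (mapsTo_collapsePair n)

lemma retractD0_leftInverse_inclD0 (n : ℕ) (hn : 4 ≤ n) :
    Function.LeftInverse (retractD0 n) (inclD0 n (by omega)) :=
  fun p => Subtype.ext (collapsePair_embedPair n hn p.2)

lemma inclD0_withBot_A0 (n : ℕ) (hn : 3 ≤ n) {i k : ℕ} (h : (i, k) ∈ SL0) :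
    (inclD0 n hn).withBot (A0 i k) = aElt n (embedCoord n hn i) (embedCoord n hn k) := by
  have hmem : (embedCoord n hn i, embedCoord n hn k) ∈ SL n := mapsTo_embedPair n hn h
  rw [A0, dif_pos h, aElt, dif_pos hmem]
  rfl

/-- For `n ≥ 4`, the map `i : D_0 → D(n)` sending `O ↦ O`, `A_{11},A_{12},A_{21},A_{22}`
to `a_{11},a_{12},a_{21},a_{22}` and `A_{33},A_{34},A_{43},A_{44}` to
`a_{n−1,n−1},a_{n−1,n},a_{n,n−1},a_{nn}` is an injective `SupBotHom` of B-modules, and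
it is splittable: some `SupBotHom` `j : D(n) → D_0` satisfies `j ∘ i = id`. -/
theorem stmt3 (n : ℕ) (hn : 4 ≤ n) :
    ∃ i : SupBotHom D0 (Dn n),
      Function.Injective i ∧
      i ⊥ = ⊥ ∧
      i (A0 1 1) = aElt n 1 1 ∧
      i (A0 1 2) = aElt n 1 2 ∧
      i (A0 2 1) = aElt n 2 1 ∧
      i (A0 2 2) = aElt n 2 2 ∧
      i (A0 3 3) = aElt n (n - 1) (n - 1) ∧
      i (A0 3 4) = aElt n (n - 1) n ∧
      i (A0 4 3) = aElt n n (n - 1) ∧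
      i (A0 4 4) = aElt n n n ∧
      ∃ j : SupBotHom (Dn n) D0, ∀ x, j (i x) = x := by
  have hji := SupHom.leftInverse_withBot (retractD0_leftInverse_inclD0 n hn)
  refine ⟨(inclD0 n (by omega)).withBot, hji.injective, rfl, ?_, ?_, ?_, ?_, ?_, ?_, ?_, ?_,
    (retractD0 n).withBot, hji⟩
  all_goals rw [inclD0_withBot_A0 n _ (mem_SL0_iff.2 (by simp))]; simp
end

section
/- For every n ≥ 2 there exist maps g : F(2n−1) → E(n) and h : E(n) → F(2n−1), each preserving ∔, − and 0, such that g is surjective and g ∘ h = id on E(n). In other words, E(n) is a retract of the free F∞-module of rank 2n−1, and hence a projective F∞-module. -/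
open scoped Classical

/-- F∞-module structure on `Option (Bool × α)` for a meet-semilattice `α`. -/
abbrev Emod (α : Type) : Type := Option (Bool × α)

/-- Negation: `−none = none`, `−some (ε, p) = some (¬ε, p)`. -/
def Emod.neg {α : Type} : Emod α → Emod α :=
  Option.map (fun p => (!p.1, p.2))

/-- Addition: `x ∔ none = none ∔ x = none`, and
`some (ε, p) ∔ some (ε', q) = some (ε, p ⊓ q)` if `ε = ε'`, `none` otherwise. -/
noncomputable def Emod.add {α : Type} [SemilatticeInf α] : Emod α → Emod α → Emod α
  | some (ε, p), some (ε', q) => if ε = ε' then some (ε, p ⊓ q) else none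
  | _, _ => none

/-- Nonzero vectors of the free F∞-module of rank `m`. -/
abbrev FVec (m : ℕ) : Type := {σ : Fin m → Option Bool // σ ≠ fun _ => none}

/-- The free F∞-module of rank `m`, with zero `none`. -/
abbrev Fm (m : ℕ) : Type := Option (FVec m)

/-- Negation on the free F∞-module: Boolean negation on each defined value. -/
def Fm.neg {m : ℕ} : Fm m → Fm m :=
  Option.map (fun σ => ⟨fun i => (σ.val i).map (fun b => !b), by
    intro hcontra
    apply σ.prop
    funext i
    have h := congrFun hcontra i
    simpa using h⟩)

/-- Addition on the free F∞-module: `none` absorbs; two nonzero vectors add to `none`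
if they clash in some coordinate, and otherwise to their pointwise merge. -/
noncomputable def Fm.add {m : ℕ} : Fm m → Fm m → Fm m
  | some σ, some τ =>
      if ∃ (i : Fin m) (b : Bool), σ.val i = some b ∧ τ.val i = some (!b) then none
      else some ⟨fun i => (σ.val i).or (τ.val i), by
        intro hcontra
        apply σ.prop
        funext i
        have h := congrFun hcontra i
        cases hv : σ.val i with
        | none => rfl
        | some b => rw [hv] at h; simp [Option.or] at h⟩
  | _, _ => none

/-- A type with F∞-module operations `0`, `∔`, `−`. -/
class FStr (α : Type) where
  z : α
  add : α → α → α
  neg : α → α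

noncomputable instance {α : Type} [SemilatticeInf α] : FStr (Emod α) :=
  ⟨none, Emod.add, Emod.neg⟩

noncomputable instance {m : ℕ} : FStr (Fm m) :=
  ⟨none, Fm.add, Fm.neg⟩

/-- A map preserving `0`, `∔` and `−`. -/
def IsFHom {α β : Type} [FStr α] [FStr β] (f : α → β) : Prop :=
  f FStr.z = FStr.z ∧ (∀ x y, f (FStr.add x y) = FStr.add (f x) (f y)) ∧
    ∀ x, f (FStr.neg x) = FStr.neg (f x)

/-- The F∞-module `E(n) = Option (Bool × S(n))`. -/
abbrev En (n : ℕ) : Type := Emod ↥(SL n)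


/-! The `2n - 1` elements `(i, min (i + 2) n)`, `1 ≤ i ≤ n`, and `(k + 1, k)`, `1 ≤ k < n`, of
`S(n)` are meet-prime, the top `(n, n)` is one of them, and every element of `S(n)` is the meet of
those above it. The section `h` sends `±p` to the vector equal to `±` exactly at the generators
above `p`; primality makes it additive, and the common top makes vectors of opposite signs clash.
The retraction `g` sends a vector whose defined coordinates all equal `ε` to `ε` together with the
meet of the generators on its support, and a vector carrying both signs to zero; since merging
vectors takes the union of supports, `g` is additive, and meet-density gives `g ∘ h = id`. -/

namespace FVec

variable {m : ℕ}

def support (σ : FVec m) : Finset (Fin m) := Finset.univ.filter fun i => σ.val i ≠ none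

lemma exists_eq_some (σ : FVec m) : ∃ i b, σ.val i = some b := by
  by_contra! h
  exact σ.prop (funext fun i => Option.eq_none_iff_forall_ne_some.2 (h i))

lemma support_nonempty (σ : FVec m) : σ.support.Nonempty := by
  obtain ⟨i, b, hi⟩ := σ.exists_eq_some
  exact ⟨i, by simp [support, hi]⟩

def sign (σ : FVec m) : Option Bool :=
  if ∀ i, σ.val i ≠ some false then some true
  else if ∀ i, σ.val i ≠ some true then some false
  else none

lemma sign_eq_some_iff {σ : FVec m} {b : Bool} : σ.sign = some b ↔ ∀ i, σ.val i ≠ some (!b) := by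
  obtain ⟨i₀, c, hc⟩ := σ.exists_eq_some
  unfold sign
  split_ifs with h₁ h₂ <;> cases b <;> simp_all
  cases c
  · exact absurd hc (h₁ i₀)
  · exact ⟨i₀, hc⟩

def Clash (σ τ : FVec m) : Prop := ∃ i b, σ.val i = some b ∧ τ.val i = some (!b)

lemma not_sign_eq_some_and_of_clash {σ τ : FVec m} (h : Clash σ τ) (b : Bool) :
    ¬(σ.sign = some b ∧ τ.sign = some b) := by
  obtain ⟨i, c, hσ, hτ⟩ := h
  rintro ⟨hσb, hτb⟩
  rw [sign_eq_some_iff] at hσb hτb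
  cases b <;> cases c <;> simp_all

lemma sign_eq_some_iff_of_merge {σ τ ρ : FVec m} (hnc : ¬Clash σ τ)
    (hρ : ∀ i, ρ.val i = (σ.val i).or (τ.val i)) (b : Bool) :
    ρ.sign = some b ↔ σ.sign = some b ∧ τ.sign = some b := by
  simp only [sign_eq_some_iff, hρ, ← forall_and]
  refine forall_congr' fun i => ?_
  have hi : ∀ c, ¬(σ.val i = some c ∧ τ.val i = some !c) := not_exists.1 (not_exists.1 hnc i)
  cases hσ : σ.val i <;> cases hτ : τ.val i <;> cases b <;> simp_all

lemma sign_of_neg {σ ρ : FVec m} (hρ : ∀ i, ρ.val i = (σ.val i).map (!·)) :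
    ρ.sign = σ.sign.map (!·) := by
  refine Option.ext fun b => ?_
  simp only [Option.map_eq_some_iff, Bool.not_eq_eq_eq_not, exists_eq_right, sign_eq_some_iff, hρ,
    Bool.not_not]
  refine forall_congr' fun i => ?_
  cases σ.val i <;> simp

variable {α : Type} [SemilatticeInf α]

def meet (P : Fin m → α) (σ : FVec m) : α :=
  σ.support.inf' σ.support_nonempty P

lemma meet_of_merge {σ τ ρ : FVec m} (hρ : ∀ i, ρ.val i = (σ.val i).or (τ.val i)) (P : Fin m → α) :
    ρ.meet P = σ.meet P ⊓ τ.meet P := by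
  have hsupp : ρ.support = σ.support ∪ τ.support := by
    ext i
    simp only [support, Finset.mem_union, Finset.mem_filter, Finset.mem_univ, true_and, hρ]
    cases σ.val i <;> cases τ.val i <;> simp
  simp only [meet, Finset.inf'_congr ρ.support_nonempty hsupp (fun _ _ => rfl)]
  exact Finset.inf'_union _ _ _

lemma meet_of_map {σ ρ : FVec m} {f : Bool → Bool} (hρ : ∀ i, ρ.val i = (σ.val i).map f)
    (P : Fin m → α) : ρ.meet P = σ.meet P := by
  have hsupp : ρ.support = σ.support := by
    ext i
    simp [support, hρ]
  exact Finset.inf'_congr _ hsupp fun _ _ => rfl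

end FVec

namespace Emod

variable {α : Type} [SemilatticeInf α]

lemma add_none_left (x : Emod α) : Emod.add none x = none := by cases x <;> rfl

lemma add_none_right (x : Emod α) : Emod.add x none = none := by cases x <;> rfl

lemma add_some_some (ε ε' : Bool) (p q : α) :
    Emod.add (some (ε, p)) (some (ε', q)) = if ε = ε' then some (ε, p ⊓ q) else none := rfl

lemma add_map_map {s t u : Option Bool} (p q : α)
    (hu : ∀ b, u = some b ↔ s = some b ∧ t = some b) :
    Emod.add (s.map (·, p)) (t.map (·, q)) = u.map (·, p ⊓ q) := by
  rcases u with _ | c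
  · rcases s with _ | a <;> rcases t with _ | b <;> try rfl
    have hab : a ≠ b := fun h => by simp [h] at hu
    simp [Emod.add, hab]
  · obtain ⟨rfl, rfl⟩ := (hu c).1 rfl
    simp [Emod.add]

end Emod

namespace Fm

variable {m : ℕ}

lemma add_none_left (x : Fm m) : Fm.add none x = none := by cases x <;> rfl

lemma add_none_right (x : Fm m) : Fm.add x none = none := by cases x <;> rfl

lemma add_of_clash {σ τ : FVec m} (h : σ.Clash τ) : Fm.add (some σ) (some τ) = none := by
  simp only [Fm.add]; exact if_pos h

lemma exists_add_eq_merge {σ τ : FVec m} (h : ¬σ.Clash τ) :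
    ∃ ρ : FVec m, Fm.add (some σ) (some τ) = some ρ ∧ ∀ i, ρ.val i = (σ.val i).or (τ.val i) :=
  ⟨_, by simp only [Fm.add]; exact if_neg h, fun _ => rfl⟩

lemma exists_neg_eq_map (σ : FVec m) :
    ∃ ρ : FVec m, Fm.neg (some σ) = some ρ ∧ ∀ i, ρ.val i = (σ.val i).map (!·) :=
  ⟨_, rfl, fun _ => rfl⟩

variable {α : Type} [SemilatticeInf α]

def toEmod (P : Fin m → α) : Fm m → Emod α
  | none => none
  | some σ => σ.sign.map (·, σ.meet P)

lemma toEmod_add (P : Fin m → α) (x y : Fm m) :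
    toEmod P (Fm.add x y) = Emod.add (toEmod P x) (toEmod P y) := by
  rcases x with _ | σ
  · rw [add_none_left, toEmod, Emod.add_none_left]
  rcases y with _ | τ
  · rw [add_none_right, toEmod, Emod.add_none_right]
  by_cases h : σ.Clash τ
  · rw [add_of_clash h]
    refine (Emod.add_map_map (u := none) _ _ fun b => ?_).symm
    simpa using FVec.not_sign_eq_some_and_of_clash h b
  · obtain ⟨ρ, hadd, hρ⟩ := exists_add_eq_merge h
    rw [hadd, toEmod, toEmod, toEmod, FVec.meet_of_merge hρ]
    exact (Emod.add_map_map _ _ (FVec.sign_eq_some_iff_of_merge h hρ)).symm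

lemma toEmod_neg (P : Fin m → α) (x : Fm m) : toEmod P (Fm.neg x) = Emod.neg (toEmod P x) := by
  rcases x with _ | σ
  · rfl
  obtain ⟨ρ, hneg, hρ⟩ := exists_neg_eq_map σ
  rw [hneg, toEmod, toEmod, FVec.sign_of_neg hρ, FVec.meet_of_map hρ]
  cases σ.sign <;> rfl

lemma isFHom_toEmod (P : Fin m → α) : IsFHom (toEmod P) :=
  ⟨rfl, toEmod_add P, toEmod_neg P⟩

end Fm

structure PrimeGenerators (α : Type) [SemilatticeInf α] (m : ℕ) where
  gen : Fin m → α
  top : Fin m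
  le_gen_top : ∀ p, p ≤ gen top
  gen_prime : ∀ j p q, p ⊓ q ≤ gen j → p ≤ gen j ∨ q ≤ gen j
  le_of_forall_le_gen : ∀ p q, (∀ j, p ≤ gen j → q ≤ gen j) → q ≤ p

namespace PrimeGenerators

variable {α : Type} [SemilatticeInf α] {m : ℕ} (B : PrimeGenerators α m)

noncomputable def vec (ε : Bool) (p : α) : FVec m :=
  ⟨fun j => if p ≤ B.gen j then some ε else none,
    fun h => by simpa [B.le_gen_top] using congrFun h B.top⟩

lemma vec_val (ε : Bool) (p : α) (j : Fin m) :
    (B.vec ε p).val j = if p ≤ B.gen j then some ε else none := rfl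

noncomputable def ofEmod : Emod α → Fm m
  | none => none
  | some (ε, p) => some (B.vec ε p)

lemma sign_vec (ε : Bool) (p : α) : (B.vec ε p).sign = some ε := by
  rw [FVec.sign_eq_some_iff]
  intro j
  rw [vec_val]
  split_ifs <;> simp

lemma meet_vec (ε : Bool) (p : α) : (B.vec ε p).meet B.gen = p := by
  have hsupp : ∀ j, j ∈ (B.vec ε p).support ↔ p ≤ B.gen j := by
    intro j
    simp [FVec.support, vec_val]
  apply le_antisymm
  · exact B.le_of_forall_le_gen _ _ fun j hj => Finset.inf'_le _ ((hsupp j).2 hj)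
  · exact Finset.le_inf' _ _ fun j hj => (hsupp j).1 hj

lemma toEmod_ofEmod (x : Emod α) : Fm.toEmod B.gen (B.ofEmod x) = x := by
  rcases x with _ | ⟨ε, p⟩
  · rfl
  · rw [ofEmod, Fm.toEmod, sign_vec, meet_vec]
    rfl

lemma vec_inf_val (ε : Bool) (p q : α) (j : Fin m) :
    (B.vec ε (p ⊓ q)).val j = ((B.vec ε p).val j).or ((B.vec ε q).val j) := by
  simp only [vec_val]
  by_cases hp : p ≤ B.gen j
  · simp [hp, inf_le_of_left_le hp]
  by_cases hq : q ≤ B.gen j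
  · simp [hp, hq, inf_le_of_right_le hq]
  · have hpq : ¬p ⊓ q ≤ B.gen j := fun h => (B.gen_prime j p q h).elim hp hq
    simp [hp, hq, hpq]

lemma not_clash_vec (ε : Bool) (p q : α) : ¬(B.vec ε p).Clash (B.vec ε q) := by
  rintro ⟨j, b, hp, hq⟩
  rw [vec_val] at hp hq
  split_ifs at hp hq
  cases b <;> simp_all

lemma clash_vec_of_ne {ε ε' : Bool} (hε : ε ≠ ε') (p q : α) : (B.vec ε p).Clash (B.vec ε' q) :=
  ⟨B.top, ε, by simp [vec_val, B.le_gen_top], by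
    cases ε <;> cases ε' <;> simp_all [vec_val, B.le_gen_top]⟩

lemma ofEmod_add (x y : Emod α) : B.ofEmod (Emod.add x y) = Fm.add (B.ofEmod x) (B.ofEmod y) := by
  rcases x with _ | ⟨ε, p⟩
  · rw [Emod.add_none_left, ofEmod, Fm.add_none_left]
  rcases y with _ | ⟨ε', q⟩
  · rw [Emod.add_none_right, ofEmod, Fm.add_none_right]
  by_cases hε : ε = ε'
  · subst hε
    obtain ⟨ρ, hadd, hρ⟩ := Fm.exists_add_eq_merge (B.not_clash_vec ε p q)
    rw [Emod.add_some_some, if_pos rfl, ofEmod, ofEmod, ofEmod, hadd]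
    exact congrArg some (Subtype.ext (funext fun j => (B.vec_inf_val ε p q j).trans (hρ j).symm))
  · rw [Emod.add_some_some, if_neg hε, ofEmod, ofEmod, ofEmod,
      Fm.add_of_clash (B.clash_vec_of_ne hε p q)]

lemma ofEmod_neg (x : Emod α) : B.ofEmod (Emod.neg x) = Fm.neg (B.ofEmod x) := by
  rcases x with _ | ⟨ε, p⟩
  · rfl
  obtain ⟨ρ, hneg, hρ⟩ := Fm.exists_neg_eq_map (B.vec ε p)
  rw [ofEmod, hneg]
  refine congrArg some (Subtype.ext (funext fun j => ?_))
  rw [hρ, vec_val, vec_val]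
  split_ifs <;> rfl

lemma isFHom_ofEmod : IsFHom B.ofEmod := ⟨rfl, B.ofEmod_add, B.ofEmod_neg⟩

end PrimeGenerators

theorem PrimeGenerators.exists_retraction {α : Type} [SemilatticeInf α] {m : ℕ}
    (B : PrimeGenerators α m) :
    ∃ (g : Fm m → Emod α) (h : Emod α → Fm m),
      IsFHom g ∧ IsFHom h ∧ Function.Surjective g ∧ ∀ x, g (h x) = x :=
  ⟨Fm.toEmod B.gen, B.ofEmod, Fm.isFHom_toEmod B.gen, B.isFHom_ofEmod,
    fun x => ⟨B.ofEmod x, B.toEmod_ofEmod x⟩, B.toEmod_ofEmod⟩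

namespace Sset

variable {n j : ℕ} {p q : ℕ × ℕ}

/-- For `j < n` the largest element `(j+1, min (j+3) n)` of `S(n)` with first coordinate `j+1`;
for `n ≤ j` the largest element `(k+1, k)` with second coordinate `k = j-n+1`. -/
def gen (n j : ℕ) : ℕ × ℕ :=
  if j < n then (j + 1, min (j + 3) n) else (j - n + 2, j - n + 1)

lemma gen_mem (hn : 2 ≤ n) (hj : j < 2 * n - 1) : gen n j ∈ Sset n := by
  unfold gen
  split <;> simp only [Sset, Set.mem_ofPred_eq] <;> omega

lemma le_gen_pred (hp : p ∈ Sset n) : p ≤ gen n (n - 1) := by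
  simp only [Sset, Set.mem_ofPred_eq] at hp
  unfold gen
  split_ifs <;> simp only [Prod.le_def] <;> omega

lemma gen_prime (hp : p ∈ Sset n) (hq : q ∈ Sset n) (h : p ⊓ q ≤ gen n j) :
    p ≤ gen n j ∨ q ≤ gen n j := by
  simp only [Sset, Set.mem_ofPred_eq] at hp hq
  unfold gen at h ⊢
  split_ifs at h ⊢ <;> simp only [Prod.le_def, Prod.fst_inf, Prod.snd_inf] at h ⊢ <;> omega

lemma exists_le_gen_fst_le (hp : p ∈ Sset n) :
    ∃ j < 2 * n - 1, p ≤ gen n j ∧ (gen n j).1 ≤ p.1 := by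
  simp only [Sset, Set.mem_ofPred_eq] at hp
  refine ⟨p.1 - 1, by omega, ?_⟩
  unfold gen
  split_ifs <;> simp only [Prod.le_def] <;> omega

lemma exists_le_gen_snd_le (hp : p ∈ Sset n) :
    ∃ j < 2 * n - 1, p ≤ gen n j ∧ (gen n j).2 ≤ p.2 := by
  simp only [Sset, Set.mem_ofPred_eq] at hp
  refine ⟨if p.2 < n then n + p.2 - 1 else p.1 - 1, by split_ifs <;> omega, ?_⟩
  unfold gen
  split_ifs <;> simp only [Prod.le_def] <;> omega

end Sset

def SL.primeGenerators {n : ℕ} (hn : 2 ≤ n) : PrimeGenerators ↥(SL n) (2 * n - 1) where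
  gen j := ⟨Sset.gen n j, Sset.gen_mem hn j.isLt⟩
  top := ⟨n - 1, by omega⟩
  le_gen_top p := Sset.le_gen_pred p.2
  gen_prime _ p q h := Sset.gen_prime p.2 q.2 h
  le_of_forall_le_gen p q h := by
    obtain ⟨j₁, hj₁, hp₁, hfst⟩ := Sset.exists_le_gen_fst_le p.2
    obtain ⟨j₂, hj₂, hp₂, hsnd⟩ := Sset.exists_le_gen_snd_le p.2
    have hq₁ : (q : ℕ × ℕ) ≤ Sset.gen n j₁ := h ⟨j₁, hj₁⟩ hp₁
    have hq₂ : (q : ℕ × ℕ) ≤ Sset.gen n j₂ := h ⟨j₂, hj₂⟩ hp₂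
    exact ⟨hq₁.1.trans hfst, hq₂.2.trans hsnd⟩

/-- For every `n ≥ 2` there exist maps `g : F(2n−1) → E(n)` and `h : E(n) → F(2n−1)`,
each preserving `∔`, `−` and `0`, with `g` surjective and `g ∘ h = id`: `E(n)` is a
retract of the free F∞-module of rank `2n−1`, hence a projective F∞-module. -/
theorem stmt5 (n : ℕ) (hn : 2 ≤ n) :
    ∃ (g : Fm (2 * n - 1) → En n) (h : En n → Fm (2 * n - 1)),
      IsFHom g ∧ IsFHom h ∧ Function.Surjective g ∧ ∀ x, g (h x) = x :=
  (SL.primeGenerators hn).exists_retraction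
end

section
/- Let C be a category, k a nontrivial ring, X_0 an object of C, (Y_i)_{i ∈ ℕ} a family of objects of C, and f_i : X_0 ⟶ Y_i morphisms such that for every i and every j < i, f_i does not factor as f_i = g ∘ u with u : X_0 ⟶ Y_j and g : Y_j ⟶ Y_i. Define the subfunctor M of the principal projective P_{X_0} by M(Z) := the k-span of {e_{g ∘ u} : i ∈ ℕ, u : X_0 ⟶ Y_i, g : Y_i ⟶ Z} inside k[Hom_C(X_0, Z)]. Then M is not finitely generated: there is no finite list of objects Z_1, …, Z_ℓ of C and elements α_j ∈ M(Z_j) such that for every object Z, M(Z) equals the k-span of {P_{X_0}(h)(α_j) : 1 ≤ j ≤ ℓ, h : Z_j ⟶ Z}. -/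
open CategoryTheory

/-- If `f_i : X₀ ⟶ Y_i` never factors through an earlier `Y_j` (`j < i`), then the
subfunctor `M` of the principal projective `P_{X₀}` generated by the `e_{g ∘ u}` with
`u : X₀ ⟶ Y_i`, `g : Y_i ⟶ Z`, is not finitely generated: there are no finitely many
objects `Z_j` and elements `α_j ∈ M(Z_j)` such that for every object `W`, `M(W)` is
the `k`-span of the images of the `α_j` under postcomposition maps. -/
theorem stmt9 {C : Type*} [Category C] (k : Type*) [Ring k] [Nontrivial k]
    (X₀ : C) (Y : ℕ → C) (f : ∀ i, X₀ ⟶ Y i)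
    (hf : ∀ i j, j < i → ¬∃ (u : X₀ ⟶ Y j) (g : Y j ⟶ Y i), u ≫ g = f i) :
    ¬∃ (ℓ : ℕ) (Z : Fin ℓ → C) (α : ∀ j, (X₀ ⟶ Z j) →₀ k),
      (∀ j, α j ∈ Submodule.span k
        {v : (X₀ ⟶ Z j) →₀ k |
          ∃ (i : ℕ) (u : X₀ ⟶ Y i) (g : Y i ⟶ Z j), v = Finsupp.single (u ≫ g) (1 : k)}) ∧
      ∀ W : C,
        Submodule.span k
          {v : (X₀ ⟶ W) →₀ k |
            ∃ (i : ℕ) (u : X₀ ⟶ Y i) (g : Y i ⟶ W), v = Finsupp.single (u ≫ g) (1 : k)} =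
        Submodule.span k
          {v : (X₀ ⟶ W) →₀ k |
            ∃ (j : Fin ℓ) (h : Z j ⟶ W), v = Finsupp.mapDomain (· ≫ h) (α j)} := by
  classical
  rintro ⟨ℓ, Z, α, hα, hspan⟩
  have hfin : ∀ j, ∃ F : Finset ((X₀ ⟶ Z j) →₀ k),
      (↑F ⊆ {v : (X₀ ⟶ Z j) →₀ k |
        ∃ (i : ℕ) (u : X₀ ⟶ Y i) (g : Y i ⟶ Z j), v = Finsupp.single (u ≫ g) (1 : k)}) ∧
      α j ∈ Submodule.span k (F : Set _) :=
    fun j => Submodule.mem_span_finite_of_mem_span (hα j)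
  choose F hFsub hFspan using hfin
  let idx : ∀ j, ((X₀ ⟶ Z j) →₀ k) → ℕ := fun j v =>
    if h : ∃ (i : ℕ) (u : X₀ ⟶ Y i) (g : Y i ⟶ Z j),
        v = Finsupp.single (u ≫ g) (1 : k) then h.choose else 0
  set N : ℕ := (Finset.univ.sup fun j => (F j).sup (idx j)) + 1 with hNdef
  have hFlt : ∀ j, ∀ v ∈ F j, ∃ i, i < N ∧ ∃ (u : X₀ ⟶ Y i) (g : Y i ⟶ Z j),
      v = Finsupp.single (u ≫ g) (1 : k) := by
    intro j v hv
    have hex : ∃ (i : ℕ) (u : X₀ ⟶ Y i) (g : Y i ⟶ Z j),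
        v = Finsupp.single (u ≫ g) (1 : k) := hFsub j hv
    refine ⟨idx j v, ?_, ?_⟩
    · have h1 : idx j v ≤ Finset.univ.sup fun j => (F j).sup (idx j) :=
        le_trans (Finset.le_sup hv) (Finset.le_sup (f := fun j => (F j).sup (idx j)) (Finset.mem_univ j))
      omega
    · have : idx j v = hex.choose := by simp only [idx, dif_pos hex]
      rw [this]
      exact hex.choose_spec
  -- the set of morphisms factoring through some `Y i`, `i < N`
  set A : Set (X₀ ⟶ Y N) :=
    {p | ∃ i, i < N ∧ ∃ (u : X₀ ⟶ Y i) (g : Y i ⟶ Y N), p = u ≫ g} with hAdef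
  have key : Submodule.span k
      {v : (X₀ ⟶ Y N) →₀ k |
        ∃ (j : Fin ℓ) (h : Z j ⟶ Y N), v = Finsupp.mapDomain (· ≫ h) (α j)} ≤
      Finsupp.supported k k A := by
    rw [Submodule.span_le]
    rintro v ⟨j, h, rfl⟩
    have hcom : α j ∈ Submodule.span k (F j : Set _) := hFspan j
    have hle : Submodule.span k (F j : Set _) ≤
        (Finsupp.supported k k A).comap (Finsupp.lmapDomain k k (· ≫ h)) := by
      rw [Submodule.span_le]
      intro v hv
      obtain ⟨i, hi, u, g, rfl⟩ := hFlt j v hv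
      simp only [SetLike.mem_coe, Submodule.mem_comap, Finsupp.lmapDomain_apply,
        Finsupp.mapDomain_single, Finsupp.mem_supported]
      intro p hp
      have hp' : p = (u ≫ g) ≫ h := by
        have h2 := Finsupp.support_single_subset hp
        simpa using h2
      exact ⟨i, hi, u, g ≫ h, by rw [hp', Category.assoc]⟩
    have := hle hcom
    simpa using this
  have hmem : Finsupp.single (f N) (1 : k) ∈ Submodule.span k
      {v : (X₀ ⟶ Y N) →₀ k |
        ∃ (i : ℕ) (u : X₀ ⟶ Y i) (g : Y i ⟶ Y N), v = Finsupp.single (u ≫ g) (1 : k)} :=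
    Submodule.subset_span ⟨N, f N, 𝟙 _, by simp⟩
  rw [hspan (Y N)] at hmem
  have hsupp := key hmem
  rw [Finsupp.mem_supported] at hsupp
  have hfN : f N ∈ A := by
    apply hsupp
    rw [Finsupp.support_single_ne_zero _ (one_ne_zero)]
    simp
  obtain ⟨i, hi, u, g, heq⟩ := hfN
  exact hf N i hi ⟨u, g, heq.symm⟩
end

section
/- Let f : (Fin n → Bool) → (Fin m → Bool) be a SupBotHom between free B-modules. Then there exist l ≤ 2^n, a SupBotHom p : (Fin n → Bool) → (Fin l → Bool), and an injective SupBotHom s : (Fin l → Bool) → (Fin m → Bool) admitting a SupBotHom left inverse, such that f = s ∘ p. -/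
open Finset

lemma bool_sup_univ {ι : Type*} [Fintype ι] (b : ι → Bool) :
    univ.sup b = decide (∃ i, b i = true) := by
  refine le_antisymm (Finset.sup_le fun i _ => ?_) ?_
  · by_cases hi : b i = true
    · rw [decide_eq_true ⟨i, hi⟩, hi]
    · simp at hi; simp [hi]
  · by_cases h : ∃ i, b i = true
    · obtain ⟨i, hi⟩ := h
      calc decide (∃ i, b i = true) ≤ true := Bool.le_true _
        _ = b i := hi.symm
        _ ≤ _ := Finset.le_sup (mem_univ i)
    · simp [h]

/-- Every `SupBotHom` `f` between free B-modules `Fin n → Bool` and `Fin m → Bool`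
factors as `f = s ∘ p` with `p` a `SupBotHom` onto a free B-module of rank `l ≤ 2^n`
and `s` an injective `SupBotHom` admitting a `SupBotHom` left inverse (a splittable
injection). -/
theorem stmt14 (n m : ℕ) (f : SupBotHom (Fin n → Bool) (Fin m → Bool)) :
    ∃ l : ℕ, l ≤ 2 ^ n ∧
      ∃ (p : SupBotHom (Fin n → Bool) (Fin l → Bool))
        (s : SupBotHom (Fin l → Bool) (Fin m → Bool)),
        Function.Injective s ∧
        (∃ t : SupBotHom (Fin m → Bool) (Fin l → Bool), ∀ x, t (s x) = x) ∧
        ∀ x, f x = s (p x) := by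
  classical
  -- the matrix of f
  set A : Fin m → (Fin n → Bool) := fun j i => f (fun i' => decide (i' = i)) j with hA
  -- key formula
  have key : ∀ (x : Fin n → Bool) (j : Fin m),
      f x j = decide (∃ i, x i = true ∧ A j i = true) := by
    intro x j
    have hx : x = univ.sup (fun i => fun i' => x i && decide (i' = i)) := by
      funext i'
      rw [Finset.sup_apply, bool_sup_univ]
      apply Bool.eq_iff_iff.mpr
      simp only [Bool.and_eq_true, decide_eq_true_eq]
      constructor
      · intro h; exact ⟨i', h, rfl⟩
      · rintro ⟨i, h1, rfl⟩; exact h1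
    conv_lhs => rw [hx]
    rw [map_finset_sup, Finset.sup_apply, bool_sup_univ]
    congr 1
    apply propext
    constructor
    · rintro ⟨i, hi⟩
      refine ⟨i, ?_, ?_⟩
      · by_contra h
        simp only [Bool.not_eq_true] at h
        have : (fun i' => x i && decide (i' = i)) = (⊥ : Fin n → Bool) := by
          funext i'; simp [h]
        rw [Function.comp_apply, this, map_bot] at hi
        exact Bool.false_ne_true hi
      · have hxi : x i = true := by
          by_contra h
          simp only [Bool.not_eq_true] at h
          have : (fun i' => x i && decide (i' = i)) = (⊥ : Fin n → Bool) := by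
            funext i'; simp [h]
          rw [Function.comp_apply, this, map_bot] at hi
          exact Bool.false_ne_true hi
        have : (fun i' => x i && decide (i' = i)) = (fun i' => decide (i' = i)) := by
          funext i'; simp [hxi]
        rw [Function.comp_apply, this] at hi
        exact hi
    · rintro ⟨i, hxi, hAi⟩
      refine ⟨i, ?_⟩
      have : (fun i' => x i && decide (i' = i)) = (fun i' => decide (i' = i)) := by
        funext i'; simp [hxi]
      rw [Function.comp_apply, this]
      exact hAi
  -- the set of rows
  set R : Finset (Fin n → Bool) := univ.image A with hR
  refine ⟨R.card, ?_, ?_⟩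
  · calc R.card ≤ Fintype.card (Fin n → Bool) := Finset.card_le_univ R
      _ = 2 ^ n := by simp [Fintype.card_fun]
  · set e : Fin R.card ≃ R := R.equivFin.symm with he
    have hmem : ∀ j, A j ∈ R := fun j => Finset.mem_image_of_mem A (mem_univ j)
    set idx : Fin m → Fin R.card := fun j => R.equivFin ⟨A j, hmem j⟩ with hidx
    have hAidx : ∀ j, (e (idx j) : Fin n → Bool) = A j := by
      intro j; simp [he, hidx]
    -- p
    refine ⟨⟨⟨fun x k => decide (∃ i, x i = true ∧ (e k : Fin n → Bool) i = true), ?_⟩, ?_⟩, ?_⟩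
    · intro x y
      funext k
      simp only [Pi.sup_apply]
      apply Bool.eq_iff_iff.mpr
      simp only [show ∀ a b : Bool, (a ⊔ b) = (a || b) from fun _ _ => rfl,
        Bool.or_eq_true, decide_eq_true_eq]
      constructor
      · rintro ⟨i, h1 | h1, h2⟩
        · exact Or.inl ⟨i, h1, h2⟩
        · exact Or.inr ⟨i, h1, h2⟩
      · rintro (⟨i, h1, h2⟩ | ⟨i, h1, h2⟩)
        · exact ⟨i, Or.inl h1, h2⟩
        · exact ⟨i, Or.inr h1, h2⟩
    · funext k
      simp
    -- s
    refine ⟨⟨⟨fun y j => y (idx j), fun y y' => rfl⟩, rfl⟩, ?_, ?_, ?_⟩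
    · -- injective
      intro y y' h
      funext k
      obtain ⟨j, _, hj⟩ := Finset.mem_image.mp (e k).2
      have hk : idx j = k := by
        have : (⟨A j, hmem j⟩ : R) = e k := Subtype.ext hj
        simp [hidx, this, he]
      have := congrFun h j
      simpa [hk] using this
    · -- left inverse
      have hg : ∀ k : Fin R.card, ∃ j, A j = (e k : Fin n → Bool) := by
        intro k
        obtain ⟨j, _, hj⟩ := Finset.mem_image.mp (e k).2
        exact ⟨j, hj⟩
      choose g hg using hg
      have hidxg : ∀ k, idx (g k) = k := by
        intro k
        have : (⟨A (g k), hmem (g k)⟩ : R) = e k := Subtype.ext (hg k)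
        simp [hidx, this, he]
      refine ⟨⟨⟨fun z k => z (g k), fun z z' => rfl⟩, rfl⟩, ?_⟩
      intro y
      funext k
      simp [hidxg k]
    · -- factorization
      intro x
      funext j
      simp only [SupBotHom.coe_mk, SupHom.coe_mk]
      rw [key x j, hAidx j]
end
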